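/- arXiv:2311.04860 — 3 statements merged into one kernel-verified Lean document; each statement's English description precedes it below -/
import Mathlib

section
/- The modified Bessel function of the first kind satisfies I₀(t) ≥ e^{t/2}/6 for all t ≥ 0, where I₀(t) = (1/2π)∫_{−π}^{π} e^{t·cos u} du. -/
open Real MeasureTheory

/-- The modified Bessel function of the first kind of order zero. -/
noncomputable def besselI0 (t : ℝ) : ℝ :=
  (1 / (2 * π)) * ∫ u in (-π)..π, Real.exp (t * Real.cos u)

/-- `I₀(t) ≥ e^{t/2}/6` for all `t ≥ 0`. -/
theorem besselI0_lower_bound (t : ℝ) (ht : 0 ≤ t) :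
    Real.exp (t / 2) / 6 ≤ besselI0 t := by
  have hπ : (0:ℝ) < π := Real.pi_pos
  have hc : Continuous fun u => Real.exp (t * Real.cos u) := by continuity
  have hint : ∀ a b : ℝ, IntervalIntegrable (fun u => Real.exp (t * Real.cos u))
      volume a b := fun a b => hc.intervalIntegrable a b
  have hsplit1 : (∫ u in (-π)..(-(π/3)), Real.exp (t * Real.cos u)) +
      (∫ u in (-(π/3))..π, Real.exp (t * Real.cos u)) =
      ∫ u in (-π)..π, Real.exp (t * Real.cos u) :=
    intervalIntegral.integral_add_adjacent_intervals (hint _ _) (hint _ _)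
  have hsplit2 : (∫ u in (-(π/3))..(π/3), Real.exp (t * Real.cos u)) +
      (∫ u in (π/3)..π, Real.exp (t * Real.cos u)) =
      ∫ u in (-(π/3))..π, Real.exp (t * Real.cos u) :=
    intervalIntegral.integral_add_adjacent_intervals (hint _ _) (hint _ _)
  have h1 : (0:ℝ) ≤ ∫ u in (-π)..(-(π/3)), Real.exp (t * Real.cos u) :=
    intervalIntegral.integral_nonneg (by linarith) (fun u _ => (Real.exp_pos _).le)
  have h3 : (0:ℝ) ≤ ∫ u in (π/3)..π, Real.exp (t * Real.cos u) :=
    intervalIntegral.integral_nonneg (by linarith) (fun u _ => (Real.exp_pos _).le)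
  have hmid : (2 * π / 3) * Real.exp (t / 2) ≤
      ∫ u in (-(π/3))..(π/3), Real.exp (t * Real.cos u) := by
    have hmono : ∫ u in (-(π/3))..(π/3), Real.exp (t / 2) ≤
        ∫ u in (-(π/3))..(π/3), Real.exp (t * Real.cos u) := by
      apply intervalIntegral.integral_mono_on (by linarith)
        (intervalIntegrable_const) (hint _ _)
      intro u hu
      rcases hu with ⟨hl, hr⟩
      have habs : |u| ≤ π / 3 := abs_le.2 ⟨by linarith, hr⟩
      have hcos : (1:ℝ)/2 ≤ Real.cos u := by
        rw [← Real.cos_abs u, ← Real.cos_pi_div_three]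
        exact Real.cos_le_cos_of_nonneg_of_le_pi (abs_nonneg u) (by linarith) habs
      have : t / 2 ≤ t * Real.cos u := by nlinarith
      exact Real.exp_le_exp.2 this
    rw [intervalIntegral.integral_const, smul_eq_mul] at hmono
    have : (π/3 - (-(π/3))) = 2 * π / 3 := by ring
    rw [this] at hmono
    exact hmono
  have hI : (2 * π / 3) * Real.exp (t / 2) ≤
      ∫ u in (-π)..π, Real.exp (t * Real.cos u) := by linarith
  unfold besselI0
  have h2π : (0:ℝ) < 1 / (2 * π) := by positivity
  calc Real.exp (t / 2) / 6 ≤ Real.exp (t / 2) / 3 := by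
        have := Real.exp_pos (t/2); linarith
    _ = (1 / (2 * π)) * ((2 * π / 3) * Real.exp (t / 2)) := by
        field_simp
    _ ≤ (1 / (2 * π)) * ∫ u in (-π)..π, Real.exp (t * Real.cos u) := by
        exact mul_le_mul_of_nonneg_left hI h2π.le
end

section
/- Let γ₁, …, γ_k be positive reals (not necessarily distinct) such that the distinct values among the γ's are linearly independent over ℚ, and for each distinct value γ among them let θ_γ be a random variable uniformly distributed on [−π, π], these random variables being independent. Then for any real numbers β₁, …, β_k, E[cos(θ_{γ₁}+β₁)⋯cos(θ_{γ_k}+β_k)] = 2^{−k} Σ e^{i(δ₁β₁+⋯+δ_kβ_k)}, where the sum runs over all sign vectors (δ₁,…,δ_k) ∈ {−1,1}^k with δ₁γ₁+⋯+δ_kγ_k = 0. -/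
open Real MeasureTheory ProbabilityTheory
open scoped Classical

/-- The sign `±1` attached to a boolean. -/
def sgn (b : Bool) : ℝ := if b then 1 else -1

lemma integrable_of_bounded' {Ω : Type*} [MeasurableSpace Ω] {μ : Measure Ω}
    [IsFiniteMeasure μ] {f : Ω → ℂ} (hf : AEStronglyMeasurable f μ) (C : ℝ)
    (h : ∀ ω, ‖f ω‖ ≤ C) : Integrable f μ :=
  Integrable.mono' (integrable_const C) hf (Filter.Eventually.of_forall h)

lemma integral_complex_ofReal' {X : Type*} [MeasurableSpace X] {μ : Measure X} {f : X → ℝ} :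
    ∫ x, ((f x : ℝ) : ℂ) ∂μ = ((∫ x, f x ∂μ : ℝ) : ℂ) := integral_ofReal

lemma IndepFun.integral_mul_complex {Ω : Type*} {mΩ : MeasurableSpace Ω} {μ : Measure Ω}
    {X Y : Ω → ℂ} (h : IndepFun X Y μ) (hX : Integrable X μ) (hY : Integrable Y μ) :
    ∫ ω, X ω * Y ω ∂μ = (∫ ω, X ω ∂μ) * ∫ ω, Y ω ∂μ := by
  set a : Ω → ℝ := fun ω => (X ω).re with ha
  set b : Ω → ℝ := fun ω => (X ω).im with hb
  set c : Ω → ℝ := fun ω => (Y ω).re with hc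
  set d : Ω → ℝ := fun ω => (Y ω).im with hd
  have hXa : Integrable a μ := hX.re
  have hXb : Integrable b μ := hX.im
  have hYc : Integrable c μ := hY.re
  have hYd : Integrable d μ := hY.im
  have hiac : IndepFun a c μ := h.comp Complex.measurable_re Complex.measurable_re
  have hiad : IndepFun a d μ := h.comp Complex.measurable_re Complex.measurable_im
  have hibc : IndepFun b c μ := h.comp Complex.measurable_im Complex.measurable_re
  have hibd : IndepFun b d μ := h.comp Complex.measurable_im Complex.measurable_im
  have i1 : Integrable (fun ω => a ω * c ω) μ := by
    exact hiac.integrable_mul hXa hYc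
  have i2 : Integrable (fun ω => b ω * d ω) μ := by
    exact hibd.integrable_mul hXb hYd
  have i3 : Integrable (fun ω => a ω * d ω) μ := by
    exact hiad.integrable_mul hXa hYd
  have i4 : Integrable (fun ω => b ω * c ω) μ := by
    exact hibc.integrable_mul hXb hYc
  have e1 : ∫ ω, a ω * c ω ∂μ = (∫ ω, a ω ∂μ) * ∫ ω, c ω ∂μ :=
    hiac.integral_fun_mul_eq_mul_integral hXa.aestronglyMeasurable hYc.aestronglyMeasurable
  have e2 : ∫ ω, b ω * d ω ∂μ = (∫ ω, b ω ∂μ) * ∫ ω, d ω ∂μ :=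
    hibd.integral_fun_mul_eq_mul_integral hXb.aestronglyMeasurable hYd.aestronglyMeasurable
  have e3 : ∫ ω, a ω * d ω ∂μ = (∫ ω, a ω ∂μ) * ∫ ω, d ω ∂μ :=
    hiad.integral_fun_mul_eq_mul_integral hXa.aestronglyMeasurable hYd.aestronglyMeasurable
  have e4 : ∫ ω, b ω * c ω ∂μ = (∫ ω, b ω ∂μ) * ∫ ω, c ω ∂μ :=
    hibc.integral_fun_mul_eq_mul_integral hXb.aestronglyMeasurable hYc.aestronglyMeasurable
  have hXeq : ∀ ω, X ω = (a ω : ℂ) + (b ω : ℂ) * Complex.I := fun ω =>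
    (Complex.re_add_im (X ω)).symm
  have hYeq : ∀ ω, Y ω = (c ω : ℂ) + (d ω : ℂ) * Complex.I := fun ω =>
    (Complex.re_add_im (Y ω)).symm
  have key : ∀ ω, X ω * Y ω =
      ((a ω * c ω - b ω * d ω : ℝ) : ℂ) + ((a ω * d ω + b ω * c ω : ℝ) : ℂ) * Complex.I := by
    intro ω
    rw [hXeq ω, hYeq ω]
    push_cast
    ring_nf
    rw [Complex.I_sq]
    ring
  rw [integral_congr_ae (Filter.Eventually.of_forall key)]
  have j1 : Integrable (fun ω => ((a ω * c ω - b ω * d ω : ℝ) : ℂ)) μ := (i1.sub i2).ofReal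
  have j2 : Integrable (fun ω => ((a ω * d ω + b ω * c ω : ℝ) : ℂ) * Complex.I) μ :=
    ((i3.add i4).ofReal).mul_const Complex.I
  rw [integral_add j1 j2]
  rw [integral_mul_const, integral_complex_ofReal', integral_complex_ofReal']
  rw [integral_sub i1 i2, integral_add i3 i4]
  have hXint : ∫ ω, X ω ∂μ = ((∫ ω, a ω ∂μ : ℝ) : ℂ) + ((∫ ω, b ω ∂μ : ℝ) : ℂ) * Complex.I := by
    have k1 : Integrable (fun ω => ((a ω : ℝ) : ℂ)) μ := hXa.ofReal
    have k2 : Integrable (fun ω => ((b ω : ℝ) : ℂ) * Complex.I) μ := hXb.ofReal.mul_const _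
    rw [integral_congr_ae (Filter.Eventually.of_forall hXeq),
      integral_add k1 k2, integral_mul_const,
      integral_complex_ofReal', integral_complex_ofReal']
  have hYint : ∫ ω, Y ω ∂μ = ((∫ ω, c ω ∂μ : ℝ) : ℂ) + ((∫ ω, d ω ∂μ : ℝ) : ℂ) * Complex.I := by
    have k1 : Integrable (fun ω => ((c ω : ℝ) : ℂ)) μ := hYc.ofReal
    have k2 : Integrable (fun ω => ((d ω : ℝ) : ℂ) * Complex.I) μ := hYd.ofReal.mul_const _
    rw [integral_congr_ae (Filter.Eventually.of_forall hYeq),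
      integral_add k1 k2, integral_mul_const,
      integral_complex_ofReal', integral_complex_ofReal']
  rw [hXint, hYint]
  push_cast [e1, e2, e3, e4]
  ring_nf
  rw [Complex.I_sq]
  ring

lemma integral_finset_prod_of_indep {ι Ω : Type*} [MeasurableSpace Ω] {μ : Measure Ω}
    [IsProbabilityMeasure μ] {f : ι → Ω → ℂ}
    (hindep : iIndepFun f μ)
    (hmeas : ∀ i, Measurable (f i)) (hbdd : ∀ i ω, ‖f i ω‖ ≤ 1) (s : Finset ι) :
    ∫ ω, ∏ i ∈ s, f i ω ∂μ = ∏ i ∈ s, ∫ ω, f i ω ∂μ := by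
  classical
  have hint : ∀ t : Finset ι, Integrable (fun ω => ∏ i ∈ t, f i ω) μ := by
    intro t
    refine integrable_of_bounded' ((Finset.measurable_prod t fun i _ => hmeas i)
      |>.aestronglyMeasurable) 1 fun ω => ?_
    calc ‖∏ i ∈ t, f i ω‖ = ∏ i ∈ t, ‖f i ω‖ := norm_prod _ _
      _ ≤ 1 := Finset.prod_le_one (fun i _ => norm_nonneg _) fun i _ => hbdd i ω
  induction s using Finset.induction_on with
  | empty => simp
  | @insert a s ha ih =>
    have hindepfun : IndepFun (fun ω => ∏ i ∈ s, f i ω) (f a) μ := by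
      have h2 : (fun ω => ∏ i ∈ s, f i ω) = ∏ j ∈ s, f j := by
        ext ω; simp
      rw [h2]
      exact hindep.indepFun_finset_prod_of_notMem hmeas ha
    calc ∫ ω, ∏ i ∈ insert a s, f i ω ∂μ
        = ∫ ω, (∏ i ∈ s, f i ω) * f a ω ∂μ := by
          refine integral_congr_ae (Filter.Eventually.of_forall fun ω => ?_)
          simp only [Finset.prod_insert ha]; ring
      _ = (∫ ω, ∏ i ∈ s, f i ω ∂μ) * ∫ ω, f a ω ∂μ :=
          IndepFun.integral_mul_complex hindepfun (hint s)
            (integrable_of_bounded' (hmeas a).aestronglyMeasurable 1 (hbdd a))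
      _ = ∏ i ∈ insert a s, ∫ ω, f i ω ∂μ := by
          rw [ih, Finset.prod_insert ha]; ring

lemma integral_exp_int_unif {Ω : Type*} [MeasurableSpace Ω] {μ : Measure Ω}
    [IsProbabilityMeasure μ] {f : Ω → ℝ} (hm : Measurable f)
    (hu : Measure.map f μ = (ENNReal.ofReal (2 * π))⁻¹ • volume.restrict (Set.Icc (-π) π))
    (c : ℤ) :
    ∫ ω, Complex.exp (Complex.I * c * f ω) ∂μ = if c = 0 then 1 else 0 := by
  have hπ : (0:ℝ) < π := pi_pos
  have hcont : Continuous fun t : ℝ => Complex.exp (Complex.I * c * t) := by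
    fun_prop
  have h1 : ∫ ω, Complex.exp (Complex.I * c * f ω) ∂μ
      = ∫ t, Complex.exp (Complex.I * c * t) ∂(Measure.map f μ) :=
    (integral_map hm.aemeasurable hcont.aestronglyMeasurable).symm
  rw [h1, hu, integral_smul_measure]
  have h2 : ∫ t in Set.Icc (-π) π, Complex.exp (Complex.I * c * t)
      = ∫ t in (-π)..π, Complex.exp (Complex.I * c * t) := by
    rw [integral_Icc_eq_integral_Ioc, intervalIntegral.integral_of_le (by linarith)]
  rw [h2]
  have htr : ((ENNReal.ofReal (2 * π))⁻¹).toReal = (2 * π)⁻¹ := by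
    rw [ENNReal.toReal_inv, ENNReal.toReal_ofReal (by positivity)]
  by_cases hc : c = 0
  · subst hc
    simp only [Int.cast_zero, mul_zero, zero_mul, Complex.exp_zero, if_true]
    rw [intervalIntegral.integral_const]
    rw [htr, Complex.real_smul, Complex.real_smul]
    have hπ' : (π : ℂ) ≠ 0 := by exact_mod_cast hπ.ne'
    push_cast
    field_simp
    ring
  · have hc' : Complex.I * c ≠ 0 := by
      have : (c : ℂ) ≠ 0 := by exact_mod_cast hc
      exact mul_ne_zero Complex.I_ne_zero this
    rw [integral_exp_mul_complex hc']
    have hsin : Complex.sin (((c : ℝ) * π : ℝ) : ℂ) = 0 := by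
      rw [← Complex.ofReal_sin]
      norm_cast
      exact Real.sin_int_mul_pi c
    have e1 : Complex.I * c * (π : ℂ) = (((c : ℝ) * π : ℝ) : ℂ) * Complex.I := by
      push_cast; ring
    have e2 : Complex.I * c * ((-π : ℝ) : ℂ) = (-((c : ℝ) * π : ℝ) : ℂ) * Complex.I := by
      push_cast; ring
    rw [e1, e2, Complex.exp_mul_I, Complex.exp_mul_I, Complex.cos_neg, Complex.sin_neg, hsin]
    simp [hc]

noncomputable def signedCount {k : ℕ} (γ : Fin k → ℝ) (δ : Fin k → Bool) (x : ℝ) : ℤ :=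
  ∑ j ∈ Finset.univ.filter (fun j => γ j = x), (if δ j then 1 else -1)

lemma sum_sgn_fiber {k : ℕ} (γ : Fin k → ℝ) (δ : Fin k → Bool) (g : ℝ → ℝ) :
    ∑ j, sgn (δ j) * g (γ j)
      = ∑ x : Set.range γ, (signedCount γ δ x : ℝ) * g x := by
  classical
  rw [← Finset.sum_fiberwise Finset.univ
    (fun j => (⟨γ j, Set.mem_range_self j⟩ : Set.range γ))
    (fun j => sgn (δ j) * g (γ j))]
  refine Finset.sum_congr rfl fun x _ => ?_
  have hfib : Finset.univ.filter
      (fun j => (⟨γ j, Set.mem_range_self j⟩ : Set.range γ) = x)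
      = Finset.univ.filter (fun j => γ j = (x : ℝ)) := by
    refine Finset.filter_congr fun j _ => ?_
    simp [Subtype.ext_iff]
  rw [hfib]
  calc ∑ j ∈ Finset.univ.filter (fun j => γ j = (x : ℝ)), sgn (δ j) * g (γ j)
      = ∑ j ∈ Finset.univ.filter (fun j => γ j = (x : ℝ)), sgn (δ j) * g x :=
        Finset.sum_congr rfl (fun j hj => by rw [(Finset.mem_filter.mp hj).2])
    _ = (∑ j ∈ Finset.univ.filter (fun j => γ j = (x : ℝ)), sgn (δ j)) * g x :=
        (Finset.sum_mul _ _ _).symm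
    _ = (signedCount γ δ x : ℝ) * g x := by
        congr 1
        rw [signedCount]
        push_cast [sgn]
        rfl

/-- Moments of products of cosines of independent uniform random variables attached to
positive reals whose distinct values are linearly independent over `ℚ`. -/
theorem expectation_prod_cos
    {Ω : Type*} [MeasurableSpace Ω] (μ : Measure Ω) [IsProbabilityMeasure μ]
    (k : ℕ) (γ : Fin k → ℝ) (hpos : ∀ j, 0 < γ j)
    (hLI : LinearIndependent ℚ (fun x : Set.range γ => (x : ℝ)))
    (θ : ℝ → Ω → ℝ) (hmeas : ∀ x : ℝ, Measurable (θ x))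
    (hindep : iIndepFun
      (fun x : Set.range γ => θ (x : ℝ)) μ)
    (hunif : ∀ x ∈ Set.range γ, Measure.map (θ x) μ =
      (ENNReal.ofReal (2 * π))⁻¹ • volume.restrict (Set.Icc (-π) π))
    (β : Fin k → ℝ) :
    ((∫ ω, ∏ j, Real.cos (θ (γ j) ω + β j) ∂μ : ℝ) : ℂ) =
      ((2 : ℂ))⁻¹ ^ k *
        ∑ δ ∈ Finset.univ.filter (fun δ : Fin k → Bool => ∑ j, sgn (δ j) * γ j = 0),
          Complex.exp (Complex.I * ∑ j, (sgn (δ j) : ℂ) * (β j : ℂ)) := by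
  classical
  set B : (Fin k → Bool) → ℂ :=
    fun δ => Complex.exp (Complex.I * ∑ j, (sgn (δ j) : ℂ) * (β j : ℂ)) with hB
  set E : (Fin k → Bool) → Ω → ℂ :=
    fun δ ω => Complex.exp (Complex.I * ∑ j, (sgn (δ j) : ℂ) * ((θ (γ j) ω : ℝ) : ℂ)) with hE
  -- pointwise expansion
  have cos_eq : ∀ t : ℝ, ((Real.cos t : ℝ) : ℂ)
      = 2⁻¹ * ∑ b : Bool, Complex.exp (Complex.I * (sgn b : ℂ) * (t : ℂ)) := by
    intro t
    rw [Fintype.sum_bool]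
    have st : sgn true = (1:ℝ) := rfl
    have sf : sgn false = (-1:ℝ) := rfl
    rw [st, sf]
    have h1 : Complex.I * ((1 : ℝ) : ℂ) * (t : ℂ) = (t : ℂ) * Complex.I := by push_cast; ring
    have h2 : Complex.I * ((-1 : ℝ) : ℂ) * (t : ℂ) = (-(t : ℂ)) * Complex.I := by
      push_cast; ring
    rw [h1, h2, Complex.exp_mul_I, Complex.exp_mul_I, Complex.cos_neg, Complex.sin_neg,
      Complex.ofReal_cos]
    ring
  have expand : ∀ ω, ((∏ j, Real.cos (θ (γ j) ω + β j) : ℝ) : ℂ)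
      = (2 : ℂ)⁻¹ ^ k * ∑ δ : Fin k → Bool, B δ * E δ ω := by
    intro ω
    rw [Complex.ofReal_prod]
    have : ∀ j : Fin k, ((Real.cos (θ (γ j) ω + β j) : ℝ) : ℂ)
        = 2⁻¹ * ∑ b : Bool, Complex.exp
            (Complex.I * (sgn b : ℂ) * ((θ (γ j) ω + β j : ℝ) : ℂ)) :=
      fun j => cos_eq _
    rw [Finset.prod_congr rfl fun j _ => this j, Finset.prod_mul_distrib,
      Finset.prod_const, Finset.card_univ, Fintype.card_fin, Fintype.prod_sum]
    congr 1
    refine Finset.sum_congr rfl fun δ _ => ?_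
    rw [← Complex.exp_sum]
    have hsum : ∑ j, Complex.I * (sgn (δ j) : ℂ) * ((θ (γ j) ω + β j : ℝ) : ℂ)
        = (Complex.I * ∑ j, (sgn (δ j) : ℂ) * (β j : ℂ))
          + (Complex.I * ∑ j, (sgn (δ j) : ℂ) * ((θ (γ j) ω : ℝ) : ℂ)) := by
      rw [Finset.mul_sum, Finset.mul_sum, ← Finset.sum_add_distrib]
      refine Finset.sum_congr rfl fun j _ => ?_
      push_cast
      ring
    rw [hsum, Complex.exp_add]
  -- measurability and integrability
  have hEmeas : ∀ δ, Measurable (E δ) := by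
    intro δ
    apply Complex.measurable_exp.comp
    apply measurable_const.mul
    exact Finset.measurable_sum _ fun j _ =>
      measurable_const.mul (Complex.measurable_ofReal.comp (hmeas (γ j)))
  have hnorm : ∀ (z : ℂ), z.re = 0 → ‖Complex.exp z‖ ≤ 1 := by
    intro z hz
    rw [Complex.norm_exp, hz, Real.exp_zero]
  have hBEint : ∀ δ, Integrable (fun ω => B δ * E δ ω) μ := by
    intro δ
    refine integrable_of_bounded' (((hEmeas δ).const_mul (B δ)).aestronglyMeasurable) 1
      fun ω => ?_
    rw [norm_mul]
    have h1 : ‖B δ‖ ≤ 1 := hnorm _ (by simp [hB])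
    have h2 : ‖E δ ω‖ ≤ 1 := hnorm _ (by simp [hE])
    calc ‖B δ‖ * ‖E δ ω‖ ≤ 1 * 1 :=
          mul_le_mul h1 h2 (norm_nonneg _) zero_le_one
      _ = 1 := one_mul 1
  -- the key computation for each δ
  have key : ∀ δ : Fin k → Bool, ∫ ω, E δ ω ∂μ
      = if ∑ j, sgn (δ j) * γ j = 0 then 1 else 0 := by
    intro δ
    set c : Set.range γ → ℤ := fun x => signedCount γ δ (x : ℝ) with hc
    have hrw : ∀ ω, E δ ω = ∏ x : Set.range γ,
        Complex.exp (Complex.I * (c x : ℂ) * ((θ (x : ℝ) ω : ℝ) : ℂ)) := by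
      intro ω
      simp only [hE]
      rw [← Complex.exp_sum]
      congr 1
      have hreal : ∑ j, sgn (δ j) * θ (γ j) ω
          = ∑ x : Set.range γ, (signedCount γ δ (x : ℝ) : ℝ) * θ (x : ℝ) ω := by
        simpa using sum_sgn_fiber γ δ (fun t => θ t ω)
      calc Complex.I * ∑ j, (sgn (δ j) : ℂ) * ((θ (γ j) ω : ℝ) : ℂ)
          = ((∑ j, sgn (δ j) * θ (γ j) ω : ℝ) : ℂ) * Complex.I := by push_cast; ring
        _ = ((∑ x : Set.range γ, (signedCount γ δ (x : ℝ) : ℝ) * θ (x : ℝ) ω : ℝ) : ℂ)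
              * Complex.I := by rw [hreal]
        _ = ∑ x : Set.range γ, Complex.I * (c x : ℂ) * ((θ (x : ℝ) ω : ℝ) : ℂ) := by
            push_cast
            rw [Finset.sum_mul]
            refine Finset.sum_congr rfl fun x _ => ?_
            ring
    have hindep' : iIndepFun
        (fun x : Set.range γ => fun ω =>
          Complex.exp (Complex.I * (c x : ℂ) * ((θ (x : ℝ) ω : ℝ) : ℂ))) μ := by
      exact hindep.comp
        (fun x => fun t : ℝ => Complex.exp (Complex.I * (c x : ℂ) * (t : ℂ)))
        (fun x => by fun_prop)
    have hmeas' : ∀ x : Set.range γ, Measurable (fun ω =>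
        Complex.exp (Complex.I * (c x : ℂ) * ((θ (x : ℝ) ω : ℝ) : ℂ))) := fun x =>
      Complex.measurable_exp.comp (measurable_const.mul
        (Complex.measurable_ofReal.comp (hmeas (x : ℝ))))
    have hbdd' : ∀ (x : Set.range γ) ω,
        ‖Complex.exp (Complex.I * (c x : ℂ) * ((θ (x : ℝ) ω : ℝ) : ℂ))‖ ≤ 1 := fun x ω =>
      hnorm _ (by simp)
    have hprod : ∫ ω, E δ ω ∂μ = ∏ x : Set.range γ,
        ∫ ω, Complex.exp (Complex.I * (c x : ℂ) * ((θ (x : ℝ) ω : ℝ) : ℂ)) ∂μ := by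
      rw [integral_congr_ae (Filter.Eventually.of_forall hrw)]
      exact integral_finset_prod_of_indep hindep' hmeas' hbdd' Finset.univ
    have hone : ∀ x : Set.range γ,
        ∫ ω, Complex.exp (Complex.I * (c x : ℂ) * ((θ (x : ℝ) ω : ℝ) : ℂ)) ∂μ
          = if c x = 0 then 1 else 0 := fun x =>
      integral_exp_int_unif (hmeas (x : ℝ)) (hunif (x : ℝ) x.2) (c x)
    have hreal' : ∑ j, sgn (δ j) * γ j
        = ∑ x : Set.range γ, (signedCount γ δ (x : ℝ) : ℝ) * (x : ℝ) := by
      simpa using sum_sgn_fiber γ δ (fun t => t)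
    have hcond : (∑ j, sgn (δ j) * γ j = 0) ↔ ∀ x : Set.range γ, c x = 0 := by
      constructor
      · intro h0
        have hz : ∑ x : Set.range γ, ((c x : ℚ)) • ((x : ℝ)) = 0 := by
          have h1 : ∑ x : Set.range γ, (signedCount γ δ (x : ℝ) : ℝ) * (x : ℝ) = 0 := by
            rw [← hreal']; exact h0
          rw [← h1]
          refine Finset.sum_congr rfl fun x _ => ?_
          rw [Rat.smul_def]
          push_cast
          rfl
        have hz2 := Fintype.linearIndependent_iff.mp hLI (fun x => (c x : ℚ)) hz
        intro x
        have := hz2 x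
        exact_mod_cast this
      · intro h
        rw [hreal']
        refine Finset.sum_eq_zero fun x _ => ?_
        have : signedCount γ δ (x : ℝ) = 0 := h x
        rw [this]
        simp
    rw [hprod, Finset.prod_congr rfl fun x _ => hone x]
    by_cases hall : ∀ x : Set.range γ, c x = 0
    · rw [if_pos (hcond.mpr hall)]
      exact Finset.prod_eq_one fun x _ => by rw [if_pos (hall x)]
    · rw [if_neg fun h0 => hall (hcond.mp h0)]
      obtain ⟨x0, hx0⟩ := not_forall.mp hall
      exact Finset.prod_eq_zero (Finset.mem_univ x0) (if_neg hx0)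
  -- put it together
  calc ((∫ ω, ∏ j, Real.cos (θ (γ j) ω + β j) ∂μ : ℝ) : ℂ)
      = ∫ ω, ((∏ j, Real.cos (θ (γ j) ω + β j) : ℝ) : ℂ) ∂μ := integral_complex_ofReal'.symm
    _ = ∫ ω, (2 : ℂ)⁻¹ ^ k * ∑ δ : Fin k → Bool, B δ * E δ ω ∂μ :=
        integral_congr_ae (Filter.Eventually.of_forall expand)
    _ = (2 : ℂ)⁻¹ ^ k * ∫ ω, ∑ δ : Fin k → Bool, B δ * E δ ω ∂μ := integral_const_mul _ _
    _ = (2 : ℂ)⁻¹ ^ k * ∑ δ : Fin k → Bool, ∫ ω, B δ * E δ ω ∂μ := by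
        rw [integral_finset_sum _ fun δ _ => hBEint δ]
    _ = (2 : ℂ)⁻¹ ^ k * ∑ δ : Fin k → Bool,
          B δ * (if ∑ j, sgn (δ j) * γ j = 0 then 1 else 0) := by
        congr 1
        refine Finset.sum_congr rfl fun δ _ => ?_
        rw [integral_const_mul, key δ]
    _ = ((2 : ℂ))⁻¹ ^ k *
        ∑ δ ∈ Finset.univ.filter (fun δ : Fin k → Bool => ∑ j, sgn (δ j) * γ j = 0), B δ := by
        rw [Finset.sum_filter]
        congr 1
        refine Finset.sum_congr rfl fun δ _ => ?_
        split <;> simp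
end

section
/- Let (γⱼ)_{j∈J} be a finite family of reals and (rⱼ) complex numbers, and define ε(t) = Σⱼ rⱼ·e^{iγⱼt}. Then (1/X)∫₁^X |ε(t)|² dt ≤ Σ_{j,k} |rⱼ·r_k|·min(1, 2/|γⱼ−γ_k|), where the term with γⱼ = γ_k is interpreted as |rⱼ r_k|. -/
open Real MeasureTheory

/-!
Expanding `|ε(t)|² = ε(t) · conj ε(t)` turns the mean square into
`Σ_{j,k} rⱼ conj(r_k) (1/X) ∫₁^X e^{i(γⱼ-γ_k)t} dt`. Each oscillatory integral has modulus at most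
the length `X - 1` of the interval, and, when `γⱼ ≠ γ_k`, at most `2/|γⱼ-γ_k|` by integrating
the exponential explicitly.
-/

open Complex ComplexConjugate

lemma norm_cexp_I_mul_ofReal_mul (x t : ℝ) : ‖cexp (I * x * t)‖ = 1 := by
  rw [mul_assoc, ← ofReal_mul, norm_exp_I_mul_ofReal]

section OscillatoryIntegral

variable (Δ a b : ℝ)

lemma norm_integral_cexp_I_mul_le_abs_sub :
    ‖∫ t in a..b, cexp (I * Δ * t)‖ ≤ |b - a| := by
  simpa using intervalIntegral.norm_integral_le_of_norm_le_const
    (fun t _ => (norm_cexp_I_mul_ofReal_mul Δ t).le)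

variable {Δ} in
lemma norm_integral_cexp_I_mul_le_two_div (hΔ : Δ ≠ 0) :
    ‖∫ t in a..b, cexp (I * Δ * t)‖ ≤ 2 / |Δ| := by
  have hIΔ : I * Δ ≠ 0 := mul_ne_zero I_ne_zero (ofReal_ne_zero.mpr hΔ)
  have hdiff : ‖cexp (I * Δ * b) - cexp (I * Δ * a)‖ ≤ 2 := by
    calc _ ≤ ‖cexp (I * Δ * b)‖ + ‖cexp (I * Δ * a)‖ := norm_sub_le _ _
      _ = 2 := by rw [norm_cexp_I_mul_ofReal_mul, norm_cexp_I_mul_ofReal_mul]; norm_num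
  rw [integral_exp_mul_complex hIΔ, norm_div, norm_mul, norm_I, one_mul, norm_real, norm_eq_abs]
  gcongr

end OscillatoryIntegral

/-- At `Δ = 0` the value is `1`, not `min 1 (2 / |0|) = 0`. -/
noncomputable def oscillationWeight (Δ : ℝ) : ℝ :=
  if Δ = 0 then 1 else min 1 (2 / |Δ|)

lemma norm_integral_cexp_I_mul_le_mul_oscillationWeight (Δ : ℝ) {X : ℝ} (hX : 1 ≤ X) :
    ‖∫ t in (1 : ℝ)..X, cexp (I * Δ * t)‖ ≤ X * oscillationWeight Δ := by
  have hlength : ‖∫ t in (1 : ℝ)..X, cexp (I * Δ * t)‖ ≤ X := by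
    have := norm_integral_cexp_I_mul_le_abs_sub Δ 1 X
    rw [abs_of_nonneg (by linarith)] at this
    linarith
  unfold oscillationWeight
  split_ifs with hΔ
  · simpa using hlength
  · rw [mul_min_of_nonneg _ _ (by linarith), mul_one]
    refine le_min hlength ((norm_integral_cexp_I_mul_le_two_div 1 X hΔ).trans ?_)
    exact le_mul_of_one_le_left (by positivity) hX

section ExponentialSum

variable {J : Type*} [Fintype J] (γ : J → ℝ) (r : J → ℂ)

lemma sum_cexp_mul_conj (t : ℝ) :
    (∑ j, r j * cexp (I * γ j * t)) * conj (∑ j, r j * cexp (I * γ j * t)) =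
      ∑ j, ∑ k, r j * conj (r k) * cexp (I * (γ j - γ k : ℝ) * t) := by
  rw [map_sum, Finset.sum_mul_sum]
  refine Finset.sum_congr rfl fun j _ => Finset.sum_congr rfl fun k _ => ?_
  simp only [map_mul, ← exp_conj, conj_I, conj_ofReal]
  rw [mul_mul_mul_comm, ← Complex.exp_add]
  push_cast
  ring_nf

lemma integral_norm_sum_cexp_sq_le (a b : ℝ) :
    ∫ t in a..b, ‖∑ j, r j * cexp (I * γ j * t)‖ ^ 2 ≤
      ∑ j, ∑ k, ‖r j‖ * ‖r k‖ * ‖∫ t in a..b, cexp (I * (γ j - γ k : ℝ) * t)‖ := by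
  have hexpand : ((∫ t in a..b, ‖∑ j, r j * cexp (I * γ j * t)‖ ^ 2 : ℝ) : ℂ) =
      ∑ j, ∑ k, r j * conj (r k) * ∫ t in a..b, cexp (I * (γ j - γ k : ℝ) * t) := by
    rw [← intervalIntegral.integral_ofReal]
    simp_rw [ofReal_pow, ← mul_conj', sum_cexp_mul_conj]
    rw [intervalIntegral.integral_finsetSum fun j _ =>
      Continuous.intervalIntegrable (by fun_prop) a b]
    refine Finset.sum_congr rfl fun j _ => ?_
    rw [intervalIntegral.integral_finsetSum fun k _ =>
      Continuous.intervalIntegrable (by fun_prop) a b]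
    exact Finset.sum_congr rfl fun k _ => intervalIntegral.integral_const_mul _ _
  calc ∫ t in a..b, ‖∑ j, r j * cexp (I * γ j * t)‖ ^ 2
      ≤ ‖((∫ t in a..b, ‖∑ j, r j * cexp (I * γ j * t)‖ ^ 2 : ℝ) : ℂ)‖ := by
        rw [norm_real, norm_eq_abs]; exact le_abs_self _
    _ ≤ _ := by
        rw [hexpand]
        refine (norm_sum_le _ _).trans (Finset.sum_le_sum fun j _ => ?_)
        refine (norm_sum_le _ _).trans_eq (Finset.sum_congr rfl fun k _ => ?_)
        rw [norm_mul, norm_mul, RCLike.norm_conj]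

end ExponentialSum

/-- Mean square bound for a Dirichlet-type sum `ε(t) = Σⱼ rⱼ e^{iγⱼt}`. -/
theorem mean_square_sum_bound
    {J : Type*} [Fintype J] (γ : J → ℝ) (r : J → ℂ) (X : ℝ) (hX : 1 ≤ X) :
    (1 / X) * ∫ t in (1 : ℝ)..X, ‖∑ j, r j * Complex.exp (Complex.I * γ j * t)‖ ^ 2 ≤
      ∑ j, ∑ k, (if γ j = γ k then ‖r j‖ * ‖r k‖
        else ‖r j‖ * ‖r k‖ * min 1 (2 / |γ j - γ k|)) := by
  have hX₀ : 0 < X := by linarith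
  have hweight (j k : J) : (if γ j = γ k then ‖r j‖ * ‖r k‖
      else ‖r j‖ * ‖r k‖ * min 1 (2 / |γ j - γ k|)) =
      ‖r j‖ * ‖r k‖ * oscillationWeight (γ j - γ k) := by
    simp [oscillationWeight, sub_eq_zero]
  rw [one_div_mul_eq_div, div_le_iff₀' hX₀, Finset.mul_sum]
  refine (integral_norm_sum_cexp_sq_le γ r 1 X).trans (Finset.sum_le_sum fun j _ => ?_)
  rw [Finset.mul_sum]
  refine Finset.sum_le_sum fun k _ => ?_
  rw [hweight, mul_left_comm]
  gcongr
  exact norm_integral_cexp_I_mul_le_mul_oscillationWeight _ hX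
end
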